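/- The domain D224 is invariant under the Klein four-group G = {id, (12)(34), (56)(78), (12)(34)(56)(78)}: for every g in G, the image of D224 under relabeling by g (replacing each element a by g(a) in every order) equals D224. -/

import Mathlib

/-- The (1-indexed) rank of the element `x` within the triple `{a, b, c}` under the
linear order `w` on `Fin n`, where `w k` is the element ranked in position `k`
(so `w.symm y` is the position of the element `y`). -/
def tripleRank {n : ℕ} (w : Equiv.Perm (Fin n)) (a b c x : Fin n) : ℕ :=
  (({a, b, c} : Finset (Fin n)).filter (fun y => w.symm y ≤ w.symm x)).card

/-- A Condorcet domain on `X_n = {1, ..., n}` (modelled as `Fin n`): for every triple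
`a < b < c` there is an element `x` of the triple and a position `i ∈ {1, 2, 3}` such
that no order of `D` places `x` in position `i` when restricted to `{a, b, c}`. -/
def IsCondorcet (n : ℕ) (D : Set (Equiv.Perm (Fin n))) : Prop :=
  ∀ a b c : Fin n, a < b → b < c →
    ∃ x ∈ ({a, b, c} : Finset (Fin n)), ∃ i ∈ ({1, 2, 3} : Finset ℕ),
      ∀ w ∈ D, tripleRank w a b c x ≠ i

/-- The image of a set of linear orders under relabelling of the alternatives by the
permutation `g`: each element `a` is replaced by `g a` in every order. -/
def relabel {n : ℕ} (g : Equiv.Perm (Fin n)) (D : Set (Equiv.Perm (Fin n))) :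
    Set (Equiv.Perm (Fin n)) :=
  (fun w => g * w) '' D

/-- The domain `D224`: all linear orders on `{1, ..., 8}` (modelled as `Fin 8`, with the
alternative `k` represented by `k - 1 : Fin 8`) satisfying the 56 listed never-laws. -/
def D224 : Set (Equiv.Perm (Fin 8)) :=
  {w | tripleRank w 0 1 2 1 ≠ 3 ∧
    tripleRank w 0 1 3 0 ≠ 3 ∧
    tripleRank w 0 1 4 4 ≠ 1 ∧
    tripleRank w 0 1 5 5 ≠ 1 ∧
    tripleRank w 0 1 6 6 ≠ 1 ∧
    tripleRank w 0 1 7 7 ≠ 1 ∧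
    tripleRank w 0 2 3 0 ≠ 3 ∧
    tripleRank w 0 2 4 4 ≠ 1 ∧
    tripleRank w 0 2 5 5 ≠ 1 ∧
    tripleRank w 0 2 6 6 ≠ 1 ∧
    tripleRank w 0 2 7 7 ≠ 1 ∧
    tripleRank w 0 3 4 0 ≠ 3 ∧
    tripleRank w 0 3 5 0 ≠ 3 ∧
    tripleRank w 0 3 6 0 ≠ 3 ∧
    tripleRank w 0 3 7 0 ≠ 3 ∧
    tripleRank w 0 4 5 0 ≠ 3 ∧
    tripleRank w 0 4 6 0 ≠ 3 ∧
    tripleRank w 0 4 7 7 ≠ 1 ∧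
    tripleRank w 0 5 6 6 ≠ 1 ∧
    tripleRank w 0 5 7 0 ≠ 3 ∧
    tripleRank w 0 6 7 0 ≠ 3 ∧
    tripleRank w 1 2 3 1 ≠ 3 ∧
    tripleRank w 1 2 4 1 ≠ 3 ∧
    tripleRank w 1 2 5 1 ≠ 3 ∧
    tripleRank w 1 2 6 1 ≠ 3 ∧
    tripleRank w 1 2 7 1 ≠ 3 ∧
    tripleRank w 1 3 4 4 ≠ 1 ∧
    tripleRank w 1 3 5 5 ≠ 1 ∧
    tripleRank w 1 3 6 6 ≠ 1 ∧
    tripleRank w 1 3 7 7 ≠ 1 ∧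
    tripleRank w 1 4 5 1 ≠ 3 ∧
    tripleRank w 1 4 6 1 ≠ 3 ∧
    tripleRank w 1 4 7 7 ≠ 1 ∧
    tripleRank w 1 5 6 6 ≠ 1 ∧
    tripleRank w 1 5 7 1 ≠ 3 ∧
    tripleRank w 1 6 7 1 ≠ 3 ∧
    tripleRank w 2 3 4 4 ≠ 1 ∧
    tripleRank w 2 3 5 5 ≠ 1 ∧
    tripleRank w 2 3 6 6 ≠ 1 ∧
    tripleRank w 2 3 7 7 ≠ 1 ∧
    tripleRank w 2 4 5 2 ≠ 3 ∧
    tripleRank w 2 4 6 2 ≠ 3 ∧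
    tripleRank w 2 4 7 7 ≠ 1 ∧
    tripleRank w 2 5 6 6 ≠ 1 ∧
    tripleRank w 2 5 7 2 ≠ 3 ∧
    tripleRank w 2 6 7 2 ≠ 3 ∧
    tripleRank w 3 4 5 3 ≠ 3 ∧
    tripleRank w 3 4 6 3 ≠ 3 ∧
    tripleRank w 3 4 7 7 ≠ 1 ∧
    tripleRank w 3 5 6 6 ≠ 1 ∧
    tripleRank w 3 5 7 3 ≠ 3 ∧
    tripleRank w 3 6 7 3 ≠ 3 ∧
    tripleRank w 4 5 6 6 ≠ 1 ∧
    tripleRank w 4 5 7 7 ≠ 1 ∧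
    tripleRank w 4 6 7 7 ≠ 1 ∧
    tripleRank w 5 6 7 6 ≠ 1}

/-!
`D224` is cut out by never-laws, and relabelling by `g` transports a never-law `(T, x, i)` to
`(g T, g x, i)`: the restriction of `g * w` to `g T` is the relabelling of the restriction of `w`
to `T`. Each element of the Klein four-group permutes the 56 never-laws of `D224`, hence fixes the
domain they define.
-/

open Equiv

section NeverLaw

variable {α : Type*} [LinearOrder α]

def rankIn (w : Perm α) (s : Finset α) (x : α) : ℕ :=
  (s.filter fun y => w.symm y ≤ w.symm x).card

theorem rankIn_mul_map (g w : Perm α) (s : Finset α) (x : α) :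
    rankIn (g * w) (s.map g.toEmbedding) (g x) = rankIn w s x := by
  simp only [rankIn, Finset.filter_map, Finset.card_map]
  congr 2
  ext y
  simp [Perm.mul_def]

/-- `(T, x, i)` forbids `x` to occupy position `i` (from the top, starting at `1`) in the restriction
of an order to `T`. -/
abbrev NeverLaw (α : Type*) := Finset α × α × ℕ

def NeverLaw.relabel (g : Perm α) (ℓ : NeverLaw α) : NeverLaw α :=
  (ℓ.1.map g.toEmbedding, g ℓ.2.1, ℓ.2.2)

def lawDomain (L : Set (NeverLaw α)) : Set (Perm α) :=
  {w | ∀ ℓ ∈ L, rankIn w ℓ.1 ℓ.2.1 ≠ ℓ.2.2}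

theorem mul_mem_lawDomain_relabel_iff (g w : Perm α) (L : Set (NeverLaw α)) :
    g * w ∈ lawDomain (NeverLaw.relabel g '' L) ↔ w ∈ lawDomain L := by
  simp only [lawDomain, Set.mem_ofPred_eq, Set.forall_mem_image, NeverLaw.relabel,
    rankIn_mul_map]

end NeverLaw

theorem relabel_lawDomain {n : ℕ} (g : Perm (Fin n)) (L : Set (NeverLaw (Fin n))) :
    relabel g (lawDomain L) = lawDomain (NeverLaw.relabel g '' L) := by
  ext w
  rw [relabel, Set.image_mul_left, Set.mem_preimage, ← mul_mem_lawDomain_relabel_iff g,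
    mul_inv_cancel_left]

def laws224 : Finset (NeverLaw (Fin 8)) :=
  {({0, 1, 2}, 1, 3), ({0, 1, 3}, 0, 3), ({0, 1, 4}, 4, 1), ({0, 1, 5}, 5, 1),
    ({0, 1, 6}, 6, 1), ({0, 1, 7}, 7, 1), ({0, 2, 3}, 0, 3), ({0, 2, 4}, 4, 1),
    ({0, 2, 5}, 5, 1), ({0, 2, 6}, 6, 1), ({0, 2, 7}, 7, 1), ({0, 3, 4}, 0, 3),
    ({0, 3, 5}, 0, 3), ({0, 3, 6}, 0, 3), ({0, 3, 7}, 0, 3), ({0, 4, 5}, 0, 3),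
    ({0, 4, 6}, 0, 3), ({0, 4, 7}, 7, 1), ({0, 5, 6}, 6, 1), ({0, 5, 7}, 0, 3),
    ({0, 6, 7}, 0, 3), ({1, 2, 3}, 1, 3), ({1, 2, 4}, 1, 3), ({1, 2, 5}, 1, 3),
    ({1, 2, 6}, 1, 3), ({1, 2, 7}, 1, 3), ({1, 3, 4}, 4, 1), ({1, 3, 5}, 5, 1),
    ({1, 3, 6}, 6, 1), ({1, 3, 7}, 7, 1), ({1, 4, 5}, 1, 3), ({1, 4, 6}, 1, 3),
    ({1, 4, 7}, 7, 1), ({1, 5, 6}, 6, 1), ({1, 5, 7}, 1, 3), ({1, 6, 7}, 1, 3),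
    ({2, 3, 4}, 4, 1), ({2, 3, 5}, 5, 1), ({2, 3, 6}, 6, 1), ({2, 3, 7}, 7, 1),
    ({2, 4, 5}, 2, 3), ({2, 4, 6}, 2, 3), ({2, 4, 7}, 7, 1), ({2, 5, 6}, 6, 1),
    ({2, 5, 7}, 2, 3), ({2, 6, 7}, 2, 3), ({3, 4, 5}, 3, 3), ({3, 4, 6}, 3, 3),
    ({3, 4, 7}, 7, 1), ({3, 5, 6}, 6, 1), ({3, 5, 7}, 3, 3), ({3, 6, 7}, 3, 3),
    ({4, 5, 6}, 6, 1), ({4, 5, 7}, 7, 1), ({4, 6, 7}, 7, 1), ({5, 6, 7}, 6, 1)}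

theorem D224_eq_lawDomain : D224 = lawDomain laws224 := by
  ext w
  simp only [D224, lawDomain, laws224, Set.mem_ofPred_eq, Finset.mem_coe,
    Finset.forall_mem_insert, Finset.mem_singleton, forall_eq]
  rfl

/-- `D224` is invariant under the Klein four-group
`G = {id, (12)(34), (56)(78), (12)(34)(56)(78)}` (acting by relabelling of the
alternatives; here alternative `k` is modelled as `k - 1 : Fin 8`). -/
theorem stmt9 :
    ∀ g ∈ ({1, Equiv.swap 0 1 * Equiv.swap 2 3, Equiv.swap 4 5 * Equiv.swap 6 7,
        Equiv.swap 0 1 * Equiv.swap 2 3 * (Equiv.swap 4 5 * Equiv.swap 6 7)} :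
        Set (Equiv.Perm (Fin 8))),
      relabel g D224 = D224 := by
  intro g hg
  have hlaws : laws224.image (NeverLaw.relabel g) = laws224 := by
    rcases hg with rfl | rfl | rfl | rfl <;> decide +kernel
  rw [D224_eq_lawDomain, relabel_lawDomain, ← Finset.coe_image, hlaws]
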